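/- Let H = (H0, H1) be a consistent partial condition over a nonempty finite set T. There exists a generalized Büchi condition consistent with H if and only if there are no P ∈ H0 and N ∈ H1 with P ⊆ N. Moreover, if there are no such P and N, then the specific generalized Büchi condition {T ∖ N : N is a ⊆-maximal element of H1} is consistent with H. -/

import Mathlib

/-! Enlarging a set preserves satisfaction of a generalized Büchi condition, so no consistent
condition allows `P ⊆ N`. Conversely, a set contained in no `N ∈ H1` meets every `T \ N`, while each
`X ∈ H1` lies below some maximal `N` (by finiteness) and so misses `T \ N`. -/

/-- The generalized Büchi condition `{T \ N : N a ⊆-maximal element of H1}`. -/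
def genBuchiOf {T : Type*} (H1 : Set (Set T)) : Set (Set T) :=
  {G | ∃ N ∈ H1, (∀ N' ∈ H1, ¬N ⊂ N') ∧ G = Set.univ \ N}

/-- A set `X` satisfies a generalized Büchi condition `B` if it intersects
every member of `B`. -/
def GenBuchiSat {T : Type*} (B : Set (Set T)) (X : Set T) : Prop :=
  ∀ F ∈ B, (X ∩ F).Nonempty

section

variable {T : Type*}

theorem GenBuchiSat.mono {B : Set (Set T)} {X Y : Set T} (h : GenBuchiSat B X) (hXY : X ⊆ Y) :
    GenBuchiSat B Y :=
  fun F hF => (h F hF).mono (Set.inter_subset_inter_left F hXY)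

theorem not_subset_of_genBuchiSat_of_not_genBuchiSat {B : Set (Set T)} {P N : Set T}
    (hP : GenBuchiSat B P) (hN : ¬GenBuchiSat B N) : ¬P ⊆ N :=
  fun hPN => hN (hP.mono hPN)

theorem genBuchiSat_genBuchiOf_iff {H1 : Set (Set T)} {X : Set T} :
    GenBuchiSat (genBuchiOf H1) X ↔ ∀ N, Maximal (· ∈ H1) N → ¬X ⊆ N := by
  simp only [GenBuchiSat, genBuchiOf, ← Set.compl_eq_univ_sdiff, Set.maximal_iff_forall_ssuperset]
  constructor
  · intro h N ⟨hN, hmax⟩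
    exact Set.inter_compl_nonempty_iff.1 (h _ ⟨N, hN, fun N' hN' hNN' => hmax hNN' hN', rfl⟩)
  · rintro h _ ⟨N, hN, hmax, rfl⟩
    exact Set.inter_compl_nonempty_iff.2 (h N ⟨hN, fun N' hNN' hN' => hmax N' hN' hNN'⟩)

theorem genBuchiSat_genBuchiOf_of_forall_not_subset {H1 : Set (Set T)} {X : Set T}
    (h : ∀ N ∈ H1, ¬X ⊆ N) : GenBuchiSat (genBuchiOf H1) X :=
  genBuchiSat_genBuchiOf_iff.2 fun N hN => h N hN.prop

theorem not_genBuchiSat_genBuchiOf_of_mem {H1 : Set (Set T)} (hH1 : H1.Finite) {X : Set T}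
    (hX : X ∈ H1) : ¬GenBuchiSat (genBuchiOf H1) X := by
  obtain ⟨N, hXN, hN⟩ := hH1.exists_le_maximal hX
  exact fun h => genBuchiSat_genBuchiOf_iff.1 h N hN hXN

end

theorem genBuchi_consistency {T : Type*} [Fintype T]
    (H0 H1 : Set (Set T)) :
    ((∃ B : Set (Set T), (∀ X ∈ H0, GenBuchiSat B X) ∧ ∀ X ∈ H1, ¬GenBuchiSat B X) ↔
      ¬∃ P ∈ H0, ∃ N ∈ H1, P ⊆ N) ∧
    ((¬∃ P ∈ H0, ∃ N ∈ H1, P ⊆ N) →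
      ((∀ X ∈ H0, GenBuchiSat (genBuchiOf H1) X) ∧
        ∀ X ∈ H1, ¬GenBuchiSat (genBuchiOf H1) X)) := by
  have consistent : (¬∃ P ∈ H0, ∃ N ∈ H1, P ⊆ N) →
      (∀ X ∈ H0, GenBuchiSat (genBuchiOf H1) X) ∧ ∀ X ∈ H1, ¬GenBuchiSat (genBuchiOf H1) X :=
    fun h => ⟨fun P hP => genBuchiSat_genBuchiOf_of_forall_not_subset
        fun N hN hPN => h ⟨P, hP, N, hN, hPN⟩,
      fun _ hN => not_genBuchiSat_genBuchiOf_of_mem H1.toFinite hN⟩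
  refine ⟨⟨?_, fun h => ⟨genBuchiOf H1, consistent h⟩⟩, consistent⟩
  rintro ⟨B, hB0, hB1⟩ ⟨P, hP, N, hN, hPN⟩
  exact not_subset_of_genBuchiSat_of_not_genBuchiSat (hB0 P hP) (hB1 N hN) hPN
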